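/- For every π ∈ P₁,₂^{sym}(n) there exists a unique partition π̂ of [±n] into pairs and singletons such that: π̂ is noncrossing with respect to the linear order −n < … < −1 < 1 < … < n, π̂ is invariant under negation, every block of π̂ is entirely contained in {1,…,n} or entirely contained in {−n,…,−1}, (a) the set of right legs of the positive pairs of π̂ equals the set of right legs of the positive pairs of π, (b) the set of left legs of the negative pairs of π̂ equals the set of left legs of the negative pairs of π, and (c) no pair of π̂ covers a singleton, i.e. there is no pair (a,b) ∈ π̂ and singleton {c} of π̂ with a < c < b. -/

import Mathlib

/-!
Let `R` be the set of right legs of the positive pairs of `π`, and consider the lattice path on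
`1, 2, …, n` that steps down at the elements of `R` and up elsewhere. Charging each `r ∈ R` to
`|a| < r`, where `(a, r)` is its pair in `π`, is injective and misses `R` by the symmetry of `π`,
so this path never drops below level `0`. Hence every down step `r` is matched with an up step
`a < r`: the path leaves level `height R r` at `a` and first comes back at `r`. These matched
pairs, together with the unmatched points as singletons, form a noncrossing partition of
`{1, …, n}` covering no singleton and with right legs `R`; adjoining its negative gives `π̂`. For symmetric partitions without self-negated pairs the left
legs of the negative pairs are the negatives of the right legs of the positive ones, so `π̂` and `π`
agree on those as well.

For uniqueness, let `r` be the smallest right leg whose partners `a₁ < a₂` in two candidates differ.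
In the first candidate `a₂` is not a singleton, since `(a₁, r)` would cover it, nor a right leg,
since it is a left leg in the second one. So it is the left leg of a pair `(a₂, y)`; `y < r`
contradicts the minimality of `r`, `y = r` gives `a₁ = a₂` and `y > r` is a crossing.
-/

noncomputable section

namespace TypeB

/-- The set [±n] = {−n,…,−1,1,…,n} ⊆ ℤ. -/
def pmSet (n : ℕ) : Set ℤ := {i | i ≠ 0 ∧ |i| ≤ (n : ℤ)}

/-- Negation of a set of integers. -/
def negSet (B : Set ℤ) : Set ℤ := (fun x : ℤ => -x) '' B

/-- π is a set partition of S: blocks are nonempty subsets of S and every element of S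
belongs to exactly one block. -/
def IsPartitionOn (S : Set ℤ) (π : Set (Set ℤ)) : Prop :=
  (∀ B ∈ π, B ⊆ S ∧ B.Nonempty) ∧ (∀ x ∈ S, ∃! B, B ∈ π ∧ x ∈ B)

/-- A block which is a pair. -/
def IsPairB (B : Set ℤ) : Prop := ∃ a b : ℤ, a ≠ b ∧ B = {a, b}

/-- A block which is a singleton. -/
def IsSingleB (B : Set ℤ) : Prop := ∃ a : ℤ, B = {a}

/-- P₁,₂^{sym}(n): partitions of [±n] into pairs and singletons, invariant under
negation, in which no pair equals its own negation. -/
def P12sym (n : ℕ) (π : Set (Set ℤ)) : Prop :=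
  IsPartitionOn (pmSet n) π ∧ (∀ B ∈ π, IsPairB B ∨ IsSingleB B) ∧
  (∀ B ∈ π, negSet B ∈ π) ∧ (∀ B ∈ π, IsPairB B → negSet B ≠ B)

/-- A partition is noncrossing: there are no i < j < k < l with i,k in one block and
j,l in a different block. -/
def NonCrossing (π : Set (Set ℤ)) : Prop :=
  ¬ ∃ (i j k l : ℤ) (B C : Set ℤ), B ∈ π ∧ C ∈ π ∧ B ≠ C ∧
    i < j ∧ j < k ∧ k < l ∧ i ∈ B ∧ k ∈ B ∧ j ∈ C ∧ l ∈ C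

/-- The set of right legs of the positive pairs of π: elements b such that (a,b) ∈ π for
some a < b with b > −a. -/
def posRightLegs (π : Set (Set ℤ)) : Set ℤ :=
  {b | ∃ a : ℤ, a < b ∧ ({a, b} : Set ℤ) ∈ π ∧ -a < b}

/-- The set of left legs of the negative pairs of π: elements a such that (a,b) ∈ π for
some b > a with b ≤ −a (i.e. the pair is not positive). -/
def negLeftLegs (π : Set (Set ℤ)) : Set ℤ :=
  {a | ∃ b : ℤ, a < b ∧ ({a, b} : Set ℤ) ∈ π ∧ ¬(-a < b)}

/-- No pair (a,b) of ρ covers a singleton {c} of ρ, i.e. a < c < b never happens. -/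
def NoCoveredSingleton (ρ : Set (Set ℤ)) : Prop :=
  ¬ ∃ a b c : ℤ, a < c ∧ c < b ∧ ({a, b} : Set ℤ) ∈ ρ ∧ ({c} : Set ℤ) ∈ ρ

/-- The defining properties of the partition π̂ associated with π ∈ P₁,₂^{sym}(n). -/
def HatProps (n : ℕ) (π ρ : Set (Set ℤ)) : Prop :=
  IsPartitionOn (pmSet n) ρ ∧
  (∀ B ∈ ρ, IsPairB B ∨ IsSingleB B) ∧
  NonCrossing ρ ∧
  (∀ B ∈ ρ, negSet B ∈ ρ) ∧
  (∀ B ∈ ρ, (∀ x ∈ B, 0 < x) ∨ (∀ x ∈ B, x < 0)) ∧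
  posRightLegs ρ = posRightLegs π ∧
  negLeftLegs ρ = negLeftLegs π ∧
  NoCoveredSingleton ρ

theorem mem_negSet {B : Set ℤ} {x : ℤ} : x ∈ negSet B ↔ -x ∈ B :=
  ⟨fun ⟨y, hy, h⟩ => h ▸ by simpa using hy, fun h => ⟨-x, h, neg_neg x⟩⟩

theorem negSet_negSet (B : Set ℤ) : negSet (negSet B) = B := by
  ext x; simp [mem_negSet]

theorem negSet_pair (a b : ℤ) : negSet {a, b} = ({-a, -b} : Set ℤ) := by
  simp [negSet, Set.image_insert_eq]

theorem negSet_singleton (a : ℤ) : negSet {a} = ({-a} : Set ℤ) := by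
  simp [negSet]

theorem IsPartitionOn.eq_of_mem {S : Set ℤ} {π : Set (Set ℤ)} (hP : IsPartitionOn S π)
    {B C : Set ℤ} (hB : B ∈ π) (hC : C ∈ π) {x : ℤ} (hxB : x ∈ B) (hxC : x ∈ C) :
    B = C :=
  (hP.2 x ((hP.1 B hB).1 hxB)).unique ⟨hB, hxB⟩ ⟨hC, hxC⟩

theorem IsPartitionOn.pair_right_eq {S : Set ℤ} {π : Set (Set ℤ)} (hP : IsPartitionOn S π)
    {a b c : ℤ} (hb : ({a, b} : Set ℤ) ∈ π) (hc : ({a, c} : Set ℤ) ∈ π) : b = c := by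
  have := Set.pair_eq_pair_iff.mp (hP.eq_of_mem hb hc (x := a) (by simp) (by simp))
  grind

theorem exists_last_eq_of_le_of_lt {f : ℤ → ℤ} (hf : ∀ t, f (t + 1) ≤ f t + 1)
    {lo hi v : ℤ} (hle : lo ≤ hi) (hlo : f lo ≤ v) (hhi : v < f hi) :
    ∃ s, lo ≤ s ∧ s < hi ∧ f s = v ∧ ∀ t, s < t → t ≤ hi → v < f t := by
  obtain ⟨s, ⟨hlos, hshi, hsv⟩, hmax⟩ := Int.exists_greatest_of_bdd
    (P := fun s => lo ≤ s ∧ s ≤ hi ∧ f s ≤ v) ⟨hi, fun _ h => h.2.1⟩ ⟨lo, le_rfl, hle, hlo⟩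
  have hbeyond : ∀ t, s < t → t ≤ hi → v < f t := fun t hst hthi => by
    by_contra! h
    exact absurd (hmax t ⟨by omega, hthi, h⟩) (by omega)
  have hshi' : s < hi := lt_of_le_of_ne hshi (by rintro rfl; omega)
  exact ⟨s, hlos, hshi', by linarith [hf s, hbeyond (s + 1) (by omega) (by omega)], hbeyond⟩

theorem exists_first_eq_of_lt_of_le {f : ℤ → ℤ} (hf : ∀ t, f t ≤ f (t + 1) + 1)
    {lo hi v : ℤ} (hle : lo ≤ hi) (hlo : v < f lo) (hhi : f hi ≤ v) :
    ∃ s, lo < s ∧ s ≤ hi ∧ f s = v ∧ ∀ t, lo ≤ t → t < s → v < f t := by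
  obtain ⟨s, ⟨hlos, hshi, hsv⟩, hmin⟩ := Int.exists_least_of_bdd
    (P := fun s => lo ≤ s ∧ s ≤ hi ∧ f s ≤ v) ⟨lo, fun _ h => h.1⟩ ⟨hi, hle, le_rfl, hhi⟩
  have hbefore : ∀ t, lo ≤ t → t < s → v < f t := fun t hlot hts => by
    by_contra! h
    exact absurd (hmin t ⟨hlot, by omega, h⟩) (by omega)
  have hlos' : lo < s := lt_of_le_of_ne hlos (by rintro rfl; omega)
  refine ⟨s, hlos', hshi, ?_, hbefore⟩
  have := hf (s - 1)
  rw [sub_add_cancel] at this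
  linarith [hbefore (s - 1) (by omega) (by omega)]

open Classical in
def height (R : Set ℤ) (x : ℤ) : ℤ := x - 2 * ((Finset.Icc 1 x).filter (· ∈ R)).card

section height

variable {R : Set ℤ}

theorem height_of_nonpos {x : ℤ} (hx : x ≤ 0) : height R x = x := by
  simp [height, Finset.Icc_eq_empty_of_lt (show x < 1 by omega)]

theorem height_add_one_of_mem {x : ℤ} (hx : 0 ≤ x) (h : x + 1 ∈ R) :
    height R (x + 1) = height R x - 1 := by
  classical
  rw [height, height, ← Finset.insert_Icc_right_eq_Icc_add_one (by omega), Finset.filter_insert,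
    if_pos h, Finset.card_insert_of_notMem (by simp)]
  push_cast; ring

theorem height_add_one_of_not_mem {x : ℤ} (hx : 0 ≤ x) (h : x + 1 ∉ R) :
    height R (x + 1) = height R x + 1 := by
  classical
  rw [height, height, ← Finset.insert_Icc_right_eq_Icc_add_one (by omega), Finset.filter_insert,
    if_neg h]
  ring

theorem height_add_one_le (x : ℤ) : height R (x + 1) ≤ height R x + 1 := by
  rcases lt_or_ge x 0 with hx | hx
  · rw [height_of_nonpos (show x + 1 ≤ 0 by omega), height_of_nonpos hx.le]
  · by_cases h : x + 1 ∈ R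
    · rw [height_add_one_of_mem hx h]; omega
    · rw [height_add_one_of_not_mem hx h]

theorem height_le_add_one (x : ℤ) : height R x ≤ height R (x + 1) + 1 := by
  rcases lt_or_ge x 0 with hx | hx
  · rw [height_of_nonpos (show x + 1 ≤ 0 by omega), height_of_nonpos hx.le]; omega
  · by_cases h : x + 1 ∈ R
    · rw [height_add_one_of_mem hx h]; omega
    · rw [height_add_one_of_not_mem hx h]; omega

theorem mem_iff_height_lt {x : ℤ} (hx : 0 < x) : x ∈ R ↔ height R x < height R (x - 1) := by
  obtain ⟨y, hy, rfl⟩ : ∃ y, 0 ≤ y ∧ x = y + 1 := ⟨x - 1, by omega, by ring⟩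
  rw [add_sub_cancel_right]
  by_cases h : y + 1 ∈ R
  · simp only [h, true_iff, height_add_one_of_mem hy h]; omega
  · simp only [h, false_iff, height_add_one_of_not_mem hy h]; omega

end height

/-- The up step `a` is matched with the down step `r`: the path leaves level `height R r` at
step `a` and first returns to it at step `r`. -/
structure Matched (R : Set ℤ) (a r : ℤ) : Prop where
  pos : 0 < a
  lt : a < r
  height_eq : height R (a - 1) = height R r
  height_gt : ∀ s, a ≤ s → s < r → height R r < height R s

namespace Matched

variable {R : Set ℤ} {a a' r r' : ℤ}

theorem mem_right (h : Matched R a r) : r ∈ R :=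
  (mem_iff_height_lt (h.pos.trans h.lt)).mpr (h.height_gt (r - 1) (by linarith [h.lt]) (by omega))

theorem not_mem_left (h : Matched R a r) : a ∉ R := by
  rw [mem_iff_height_lt h.pos, h.height_eq]
  exact not_lt.mpr (h.height_gt a le_rfl h.lt).le

theorem left_unique (h : Matched R a r) (h' : Matched R a' r) : a = a' := by
  by_contra hne
  rcases lt_or_gt_of_ne hne with hlt | hlt
  · linarith [h.height_gt (a' - 1) (by omega) (by linarith [h'.lt]), h'.height_eq]
  · linarith [h'.height_gt (a - 1) (by omega) (by linarith [h.lt]), h.height_eq]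

theorem right_unique (h : Matched R a r) (h' : Matched R a r') : r = r' := by
  by_contra hne
  rcases lt_or_gt_of_ne hne with hlt | hlt
  · linarith [h'.height_gt r h.lt.le hlt, h.height_eq, h'.height_eq]
  · linarith [h.height_gt r' h'.lt.le hlt, h.height_eq, h'.height_eq]

theorem not_cross (h : Matched R a r) (h' : Matched R a' r') (haa' : a < a') (ha'r : a' < r)
    (hrr' : r < r') : False := by
  linarith [h'.height_gt r ha'r.le hrr', h.height_gt (a' - 1) (by omega) (by omega), h'.height_eq]

theorem exists_of_mem_Ioo {c : ℤ} (h : Matched R a r) (hac : a < c) (hcr : c < r) :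
    ∃ x, Matched R c x ∨ Matched R x c := by
  obtain ⟨ha, -, hlevel, hgt⟩ := h
  by_cases hc : c ∈ R
  · have hdown := (mem_iff_height_lt (by omega)).mp hc
    obtain ⟨s, hs, hsc, hsv, hbeyond⟩ := exists_last_eq_of_le_of_lt height_add_one_le
      (show a - 1 ≤ c - 1 by omega) (by linarith [hgt c hac.le hcr]) hdown
    refine ⟨s + 1, Or.inr ⟨by omega, by omega, by simpa using hsv, fun t ht htc => ?_⟩⟩
    exact hbeyond t (by omega) (by omega)
  · have hup : height R (c - 1) < height R c := by
      have := height_add_one_of_not_mem (R := R) (x := c - 1) (by omega) (by simpa using hc)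
      rw [sub_add_cancel] at this; omega
    have hlow : height R r < height R (c - 1) := hgt (c - 1) (by omega) (by omega)
    obtain ⟨s, hcs, hsr, hsv, hbefore⟩ := exists_first_eq_of_lt_of_le height_le_add_one
      hcr.le hup hlow.le
    exact ⟨s, Or.inl ⟨by omega, hcs, hsv.symm, fun t hct hts => hsv ▸ hbefore t hct hts⟩⟩

theorem exists_left_of_mem {r : ℤ} (hr : r ∈ R) (hr0 : 0 < r) (hbal : 0 ≤ height R r) :
    ∃ a, Matched R a r := by
  obtain ⟨s, hs, hsr, hsv, hbeyond⟩ := exists_last_eq_of_le_of_lt height_add_one_le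
    (show 0 ≤ r - 1 by omega) (by rwa [height_of_nonpos le_rfl])
    ((mem_iff_height_lt hr0).mp hr)
  exact ⟨s + 1, by omega, by omega, by simpa using hsv,
    fun t ht htr => hbeyond t (by omega) (by omega)⟩

end Matched

def dyckBlocks (n : ℕ) (R : Set ℤ) : Set (Set ℤ) :=
  {B | (∃ a r, Matched R a r ∧ B = {a, r}) ∨
    ∃ c : ℤ, 0 < c ∧ c ≤ n ∧ (¬ ∃ x, Matched R c x ∨ Matched R x c) ∧ B = {c}}

section dyckBlocks

variable {n : ℕ} {R : Set ℤ}

theorem mem_iff_of_mem_dyckBlocks {B : Set ℤ} (hB : B ∈ dyckBlocks n R) {c : ℤ} (hc : c ∈ B)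
    (x : ℤ) : x ∈ B ↔ x = c ∨ Matched R c x ∨ Matched R x c := by
  rcases hB with ⟨a, r, h, rfl⟩ | ⟨c', -, -, hun, rfl⟩
  · have hr : ∀ {y}, ¬ Matched R r y := fun hy => hy.not_mem_left h.mem_right
    have ha : ∀ {y}, ¬ Matched R y a := fun hy => h.not_mem_left hy.mem_right
    rcases hc with rfl | hc
    · refine ⟨?_, fun hx => ?_⟩
      · rintro (rfl | rfl)
        exacts [Or.inl rfl, Or.inr (Or.inl h)]
      · rcases hx with rfl | hx | hx
        exacts [Or.inl rfl, Or.inr (h.right_unique hx).symm, (ha hx).elim]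
    · obtain rfl : c = r := hc
      refine ⟨?_, fun hx => ?_⟩
      · rintro (rfl | rfl)
        exacts [Or.inr (Or.inr h), Or.inl rfl]
      · rcases hx with rfl | hx | hx
        exacts [Or.inr rfl, (hr hx).elim, Or.inl (hx.left_unique h)]
  · obtain rfl : c = c' := hc
    exact ⟨Or.inl, fun hx => hx.elim id fun hx => (hun ⟨x, hx⟩).elim⟩

theorem Matched.of_mem_dyckBlocks {B : Set ℤ} (hB : B ∈ dyckBlocks n R) {x y : ℤ} (hx : x ∈ B)
    (hy : y ∈ B) (hxy : x < y) : Matched R x y := by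
  rcases (mem_iff_of_mem_dyckBlocks hB hx y).mp hy with rfl | h | h
  exacts [(lt_irrefl _ hxy).elim, h, absurd h.lt hxy.not_gt]

theorem dyckBlocks_isPartitionOn (hRn : ∀ r ∈ R, r ≤ n) :
    IsPartitionOn (Set.Icc 1 n) (dyckBlocks n R) := by
  refine ⟨fun B hB => ?_, fun c hc => ?_⟩
  · rcases hB with ⟨a, r, h, rfl⟩ | ⟨c, hc0, hcn, -, rfl⟩
    · have := hRn r h.mem_right
      refine ⟨?_, a, Set.mem_insert a _⟩
      rintro x (rfl | rfl) <;> constructor <;> linarith [h.pos, h.lt]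
    · exact ⟨by simpa using ⟨hc0, hcn⟩, c, rfl⟩
  · have hex : ∃ B ∈ dyckBlocks n R, c ∈ B := by
      by_cases hun : ∃ x, Matched R c x ∨ Matched R x c
      · obtain ⟨x, h | h⟩ := hun
        exacts [⟨_, Or.inl ⟨c, x, h, rfl⟩, Set.mem_insert c _⟩,
          ⟨_, Or.inl ⟨x, c, h, rfl⟩, Set.mem_insert_of_mem x rfl⟩]
      · exact ⟨{c}, Or.inr ⟨c, hc.1, hc.2, hun, rfl⟩, rfl⟩
    obtain ⟨B, hB, hcB⟩ := hex
    refine ⟨B, ⟨hB, hcB⟩, fun C ⟨hC, hcC⟩ => Set.ext fun x => ?_⟩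
    rw [mem_iff_of_mem_dyckBlocks hB hcB, mem_iff_of_mem_dyckBlocks hC hcC]

theorem dyckBlocks_pair_or_single : ∀ B ∈ dyckBlocks n R, IsPairB B ∨ IsSingleB B := by
  rintro B (⟨a, r, h, rfl⟩ | ⟨c, -, -, -, rfl⟩)
  exacts [Or.inl ⟨a, r, h.lt.ne, rfl⟩, Or.inr ⟨c, rfl⟩]

theorem dyckBlocks_nonCrossing : NonCrossing (dyckBlocks n R) :=
  fun ⟨_, _, _, _, _, _, hB, hC, _, hij, hjk, hkl, hiB, hkB, hjC, hlC⟩ =>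
    (Matched.of_mem_dyckBlocks hB hiB hkB (hij.trans hjk)).not_cross
      (Matched.of_mem_dyckBlocks hC hjC hlC (hjk.trans hkl)) hij hjk hkl

theorem dyckBlocks_noCoveredSingleton : NoCoveredSingleton (dyckBlocks n R) := by
  rintro ⟨a, b, c, hac, hcb, hab, hc⟩
  obtain ⟨x, hx⟩ := (Matched.of_mem_dyckBlocks hab (Set.mem_insert a _)
    (Set.mem_insert_of_mem a rfl) (hac.trans hcb)).exists_of_mem_Ioo hac hcb
  obtain rfl : x = c := (mem_iff_of_mem_dyckBlocks hc rfl x).mpr (Or.inr hx)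
  exact hx.elim (fun h => lt_irrefl _ h.lt) fun h => lt_irrefl _ h.lt

theorem posRightLegs_dyckBlocks (hR : ∀ r ∈ R, 0 < r ∧ 0 ≤ height R r) :
    posRightLegs (dyckBlocks n R) = R := by
  ext r
  refine ⟨fun ⟨a, har, hmem, _⟩ => ?_, fun hr => ?_⟩
  · exact (Matched.of_mem_dyckBlocks hmem (Set.mem_insert a _) (Set.mem_insert_of_mem a rfl)
      har).mem_right
  · obtain ⟨a, h⟩ := Matched.exists_left_of_mem hr (hR r hr).1 (hR r hr).2
    exact ⟨a, h.lt, Or.inl ⟨a, r, h, rfl⟩, by linarith [h.pos, h.lt]⟩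

end dyckBlocks

theorem mem_pmSet_iff {n : ℕ} {x : ℤ} :
    x ∈ pmSet n ↔ x ∈ Set.Icc 1 (n : ℤ) ∨ -x ∈ Set.Icc 1 (n : ℤ) := by
  simp only [pmSet, Set.mem_ofPred_eq, Set.mem_Icc, abs_le]
  omega

def symmetrize (P : Set (Set ℤ)) : Set (Set ℤ) := {B | B ∈ P ∨ negSet B ∈ P}

section symmetrize

variable {P : Set (Set ℤ)} {B : Set ℤ} {x : ℤ}

theorem negSet_mem_symmetrize (hB : B ∈ symmetrize P) : negSet B ∈ symmetrize P := by
  rcases hB with h | h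
  exacts [Or.inr (by rwa [negSet_negSet]), Or.inl h]

theorem mem_of_mem_symmetrize (hP : ∀ B ∈ P, ∀ x ∈ B, 0 < x) (hB : B ∈ symmetrize P)
    (hx : x ∈ B) (h0 : 0 < x) : B ∈ P :=
  hB.resolve_right fun h => by linarith [hP _ h (-x) (mem_negSet.mpr (by rwa [neg_neg]))]

theorem negSet_mem_of_mem_symmetrize (hP : ∀ B ∈ P, ∀ x ∈ B, 0 < x) (hB : B ∈ symmetrize P)
    (hx : x ∈ B) (h0 : x < 0) : negSet B ∈ P :=
  hB.resolve_left fun h => by linarith [hP B h x hx]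

theorem symmetrize_sign (hP : ∀ B ∈ P, ∀ x ∈ B, 0 < x) :
    ∀ B ∈ symmetrize P, (∀ x ∈ B, 0 < x) ∨ (∀ x ∈ B, x < 0) := by
  rintro B (h | h)
  · exact Or.inl (hP B h)
  · exact Or.inr fun x hx => neg_pos.mp (hP _ h (-x) (mem_negSet.mpr (by rwa [neg_neg])))

theorem symmetrize_isPartitionOn {n : ℕ} (hP : IsPartitionOn (Set.Icc 1 (n : ℤ)) P) :
    IsPartitionOn (pmSet n) (symmetrize P) := by
  have hpos : ∀ B ∈ P, ∀ x ∈ B, 0 < x := fun B hB x hx => ((hP.1 B hB).1 hx).1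
  refine ⟨fun B hB => ⟨fun x hx => ?_, ?_⟩, fun x hx => ?_⟩
  · rcases hB with h | h
    exacts [mem_pmSet_iff.mpr (Or.inl ((hP.1 B h).1 hx)),
      mem_pmSet_iff.mpr (Or.inr ((hP.1 _ h).1 (mem_negSet.mpr (by rwa [neg_neg]))))]
  · rcases hB with h | h
    · exact (hP.1 B h).2
    · obtain ⟨y, hy⟩ := (hP.1 _ h).2
      exact ⟨-y, mem_negSet.mp hy⟩
  · rcases mem_pmSet_iff.mp hx with hx | hx
    · obtain ⟨B, ⟨hB, hxB⟩, huniq⟩ := hP.2 x hx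
      exact ⟨B, ⟨Or.inl hB, hxB⟩, fun C ⟨hC, hxC⟩ =>
        huniq C ⟨mem_of_mem_symmetrize hpos hC hxC hx.1, hxC⟩⟩
    · obtain ⟨B, ⟨hB, hxB⟩, huniq⟩ := hP.2 (-x) hx
      refine ⟨negSet B, ⟨Or.inr (by rwa [negSet_negSet]), mem_negSet.mpr hxB⟩,
        fun C ⟨hC, hxC⟩ => ?_⟩
      rw [← huniq _ ⟨negSet_mem_of_mem_symmetrize hpos hC hxC (by linarith [hx.1]),
        mem_negSet.mpr (by rwa [neg_neg])⟩, negSet_negSet]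

theorem symmetrize_pair_or_single (hP : ∀ B ∈ P, IsPairB B ∨ IsSingleB B) :
    ∀ B ∈ symmetrize P, IsPairB B ∨ IsSingleB B := by
  rintro B (h | h)
  · exact hP B h
  · rw [← negSet_negSet B]
    rcases hP _ h with ⟨a, b, hab, hB⟩ | ⟨a, hB⟩ <;> rw [hB]
    · exact Or.inl ⟨-a, -b, neg_injective.ne hab, negSet_pair a b⟩
    · exact Or.inr ⟨-a, negSet_singleton a⟩

theorem symmetrize_nonCrossing (hP : ∀ B ∈ P, ∀ x ∈ B, 0 < x) (hnc : NonCrossing P) :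
    NonCrossing (symmetrize P) := by
  rintro ⟨i, j, k, l, B, C, hB, hC, hBC, hij, hjk, hkl, hiB, hkB, hjC, hlC⟩
  rcases symmetrize_sign hP B hB with hBpos | hBneg
  · have hj : 0 < j := (hBpos i hiB).trans hij
    exact hnc ⟨i, j, k, l, B, C, mem_of_mem_symmetrize hP hB hiB (hBpos i hiB),
      mem_of_mem_symmetrize hP hC hjC hj, hBC, hij, hjk, hkl, hiB, hkB, hjC, hlC⟩
  · have hk : k < 0 := hBneg k hkB
    refine hnc ⟨-l, -k, -j, -i, negSet C, negSet B,
      negSet_mem_of_mem_symmetrize hP hC hjC (hjk.trans hk),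
      negSet_mem_of_mem_symmetrize hP hB hkB hk,
      fun h => hBC (by rw [← negSet_negSet B, ← h, negSet_negSet]), by linarith, by linarith,
      by linarith, ?_, ?_, ?_, ?_⟩ <;> simpa [mem_negSet]

theorem symmetrize_noCoveredSingleton (hP : ∀ B ∈ P, ∀ x ∈ B, 0 < x)
    (hnc : NoCoveredSingleton P) : NoCoveredSingleton (symmetrize P) := by
  rintro ⟨a, b, c, hac, hcb, hab, hc⟩
  rcases symmetrize_sign hP _ hab with hpos | hneg
  · have ha := hpos a (Set.mem_insert a _)
    exact hnc ⟨a, b, c, hac, hcb, mem_of_mem_symmetrize hP hab (Set.mem_insert a _) ha,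
      mem_of_mem_symmetrize hP hc rfl (ha.trans hac)⟩
  · have hb := hneg b (Set.mem_insert_of_mem a rfl)
    have hab' := negSet_mem_of_mem_symmetrize hP hab (Set.mem_insert_of_mem a rfl) hb
    have hc' := negSet_mem_of_mem_symmetrize hP hc rfl (hcb.trans hb)
    rw [negSet_pair, Set.pair_comm] at hab'
    rw [negSet_singleton] at hc'
    exact hnc ⟨-b, -a, -c, by linarith, by linarith, hab', hc'⟩

theorem posRightLegs_symmetrize (hP : ∀ B ∈ P, ∀ x ∈ B, 0 < x) :
    posRightLegs (symmetrize P) = posRightLegs P := by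
  ext b
  refine ⟨fun ⟨a, hab, hmem, hneg⟩ => ⟨a, hab, ?_, hneg⟩, fun ⟨a, hab, hmem, hneg⟩ =>
    ⟨a, hab, Or.inl hmem, hneg⟩⟩
  exact mem_of_mem_symmetrize hP hmem (Set.mem_insert_of_mem a rfl) (by linarith)

end symmetrize

theorem negLeftLegs_eq {σ : Set (Set ℤ)} (hsym : ∀ B ∈ σ, negSet B ∈ σ)
    (hns : ∀ B ∈ σ, IsPairB B → negSet B ≠ B) :
    negLeftLegs σ = {a | -a ∈ posRightLegs σ} := by
  ext a
  refine ⟨fun ⟨b, hab, hmem, hnp⟩ => ?_, fun ⟨c, hc, hmem, hcp⟩ => ?_⟩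
  · have hba : b ≠ -a := by
      rintro rfl
      exact hns _ hmem ⟨a, -a, hab.ne, rfl⟩ (by rw [negSet_pair, neg_neg, Set.pair_comm])
    have := hsym _ hmem
    rw [negSet_pair, Set.pair_comm] at this
    exact ⟨-b, by omega, this, by omega⟩
  · have := hsym _ hmem
    rw [negSet_pair, neg_neg, Set.pair_comm] at this
    exact ⟨-c, by omega, this, by omega⟩

theorem negSet_ne_self {B : Set ℤ} (hne : B.Nonempty)
    (hsign : (∀ x ∈ B, 0 < x) ∨ (∀ x ∈ B, x < 0)) : negSet B ≠ B := by
  obtain ⟨x, hx⟩ := hne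
  intro h
  have hx' : -x ∈ B := by rw [← h, mem_negSet, neg_neg]; exact hx
  rcases hsign with hpos | hneg
  · linarith [hpos x hx, hpos _ hx']
  · linarith [hneg x hx, hneg _ hx']

theorem height_nonneg_of_injOn {R : Set ℤ} {f : ℤ → ℤ} (hf : ∀ r ∈ R, 0 < f r ∧ f r < r)
    (hinj : Set.InjOn f R) (hfR : ∀ r ∈ R, f r ∉ R) {b : ℤ} (hb : 0 ≤ b) :
    0 ≤ height R b := by
  classical
  set F := (Finset.Icc 1 b).filter (· ∈ R)
  have hFR : ∀ r ∈ F, r ∈ R ∧ 1 ≤ r ∧ r ≤ b := fun r hr => by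
    simp only [F, Finset.mem_filter, Finset.mem_Icc] at hr
    exact ⟨hr.2, hr.1⟩
  have hdisj : Disjoint F (F.image f) := Finset.disjoint_right.mpr fun x hx hxF => by
    obtain ⟨r, hr, rfl⟩ := Finset.mem_image.mp hx
    exact hfR r (hFR r hr).1 (hFR _ hxF).1
  have hsub : F ∪ F.image f ⊆ Finset.Icc 1 b := Finset.union_subset (Finset.filter_subset _ _)
    fun x hx => by
      obtain ⟨r, hr, rfl⟩ := Finset.mem_image.mp hx
      have := hf r (hFR r hr).1
      exact Finset.mem_Icc.mpr ⟨by linarith, by linarith [(hFR r hr).2.2]⟩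
  have hcard := Finset.card_le_card hsub
  rw [Finset.card_union_of_disjoint hdisj,
    Finset.card_image_of_injOn (hinj.mono fun r hr => (hFR r hr).1), Int.card_Icc] at hcard
  change 0 ≤ b - 2 * (F.card : ℤ)
  omega

section P12sym

variable {n : ℕ} {π : Set (Set ℤ)}

theorem P12sym.posRightLegs_bounds (hπ : P12sym n π) {r : ℤ} (hr : r ∈ posRightLegs π) :
    0 < r ∧ r ≤ n := by
  obtain ⟨a, har, hmem, hpos⟩ := hr
  have := mem_pmSet_iff.mp ((hπ.1.1 _ hmem).1 (Set.mem_insert_of_mem a rfl))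
  simp only [Set.mem_Icc] at this
  omega

theorem P12sym.height_posRightLegs_nonneg (hπ : P12sym n π) {b : ℤ} (hb : 0 ≤ b) :
    0 ≤ height (posRightLegs π) b := by
  have hpartner : ∀ r ∈ posRightLegs π, ∃ a, ({a, r} : Set ℤ) ∈ π ∧ |a| < r :=
    fun r ⟨a, h1, h2, h3⟩ => ⟨a, h2, abs_lt.mpr ⟨by linarith, h1⟩⟩
  choose! A hAπ hAlt using hpartner
  have hneg : ∀ r ∈ posRightLegs π, ({-A r, -r} : Set ℤ) ∈ π := fun r hr => by
    rw [← negSet_pair]; exact hπ.2.2.1 _ (hAπ r hr)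
  refine height_nonneg_of_injOn (f := fun r => |A r|) (fun r hr => ⟨?_, hAlt r hr⟩) ?_ ?_ hb
  · exact abs_pos.mpr ((hπ.1.1 _ (hAπ r hr)).1 (Set.mem_insert _ _)).1
  · intro r hr s hs h
    rcases abs_eq_abs.mp h with h | h
    · exact hπ.1.pair_right_eq (hAπ r hr) (h ▸ hAπ s hs)
    · have := hπ.1.pair_right_eq (hAπ r hr) (h ▸ hneg s hs)
      linarith [abs_nonneg (A r), hAlt r hr, abs_nonneg (A s), hAlt s hs]
  · intro r hr hmem
    have hs := hAlt _ hmem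
    rcases abs_choice (A r) with h | h <;> rw [h] at hmem hs
    · have := hπ.1.pair_right_eq (hAπ r hr) (by rw [Set.pair_comm]; exact hAπ _ hmem)
      linarith [le_abs_self (A (A r)), hAlt r hr, h]
    · have := hπ.1.pair_right_eq (hAπ r hr)
        (by rw [Set.pair_comm, ← neg_neg (A r)]; exact hneg _ hmem)
      linarith [neg_abs_le (A (-A r)), hAlt r hr, h]

end P12sym

theorem mem_posRightLegs_iff {ρ : Set (Set ℤ)}
    (hsign : ∀ B ∈ ρ, (∀ x ∈ B, 0 < x) ∨ (∀ x ∈ B, x < 0)) {r : ℤ} :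
    r ∈ posRightLegs ρ ↔ ∃ a, 0 < a ∧ a < r ∧ ({a, r} : Set ℤ) ∈ ρ := by
  refine ⟨fun ⟨a, har, hmem, hpos⟩ => ⟨a, ?_, har, hmem⟩, fun ⟨a, ha, har, hmem⟩ =>
    ⟨a, har, hmem, by linarith⟩⟩
  rcases hsign _ hmem with h | h
  · exact h a (Set.mem_insert a _)
  · linarith [h r (Set.mem_insert_of_mem a rfl)]

theorem left_not_mem_posRightLegs {S : Set ℤ} {ρ : Set (Set ℤ)} (hP : IsPartitionOn S ρ)
    {a r : ℤ} (hmem : ({a, r} : Set ℤ) ∈ ρ) (har : a < r) : a ∉ posRightLegs ρ :=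
  fun ⟨c, hca, hcm, _⟩ => by
    rw [Set.pair_comm] at hcm
    linarith [hP.pair_right_eq hmem hcm]

section HatProps

variable {n : ℕ} {π ρ ρ₁ ρ₂ : Set (Set ℤ)}

theorem HatProps.isPartitionOn (h : HatProps n π ρ) : IsPartitionOn (pmSet n) ρ := h.1

theorem HatProps.pair_or_single (h : HatProps n π ρ) : ∀ B ∈ ρ, IsPairB B ∨ IsSingleB B := h.2.1

theorem HatProps.nonCrossing (h : HatProps n π ρ) : NonCrossing ρ := h.2.2.1

theorem HatProps.negSet_mem (h : HatProps n π ρ) : ∀ B ∈ ρ, negSet B ∈ ρ := h.2.2.2.1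

theorem HatProps.sign (h : HatProps n π ρ) :
    ∀ B ∈ ρ, (∀ x ∈ B, 0 < x) ∨ (∀ x ∈ B, x < 0) := h.2.2.2.2.1

theorem HatProps.posRightLegs_eq (h : HatProps n π ρ) : posRightLegs ρ = posRightLegs π :=
  h.2.2.2.2.2.1

theorem HatProps.noCoveredSingleton (h : HatProps n π ρ) : NoCoveredSingleton ρ := h.2.2.2.2.2.2.2

theorem HatProps.block_of_pos (hρ : HatProps n π ρ) {x : ℤ} (hx : x ∈ pmSet n) (h0 : 0 < x) :
    ({x} : Set ℤ) ∈ ρ ∨ ∃ a b, 0 < a ∧ a < b ∧ ({a, b} : Set ℤ) ∈ ρ ∧ x ∈ ({a, b} : Set ℤ) := by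
  obtain ⟨B, ⟨hB, hxB⟩, -⟩ := hρ.isPartitionOn.2 x hx
  have hpos : ∀ y ∈ B, 0 < y := (hρ.sign B hB).resolve_right fun h => by
    linarith [h x hxB]
  rcases hρ.pair_or_single B hB with ⟨u, v, huv, rfl⟩ | ⟨c, rfl⟩
  · have hu := hpos u (Set.mem_insert u _)
    have hv := hpos v (Set.mem_insert_of_mem u rfl)
    right
    rcases lt_or_gt_of_ne huv with h | h
    · exact ⟨u, v, hu, h, hB, hxB⟩
    · exact ⟨v, u, hv, h, Set.pair_comm u v ▸ hB, Set.pair_comm u v ▸ hxB⟩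
  · obtain rfl : x = c := hxB
    exact Or.inl hB

theorem HatProps.not_lt_of_partners (h₁ : HatProps n π ρ₁) (h₂ : HatProps n π ρ₂)
    {a₁ a₂ r : ℤ} (ha₁ : 0 < a₁) (hr₁ : ({a₁, r} : Set ℤ) ∈ ρ₁) (hr₂ : ({a₂, r} : Set ℤ) ∈ ρ₂)
    (ha₁₂ : a₁ < a₂) (ha₂r : a₂ < r)
    (IH : ∀ s < r, ∀ b c, 0 < b → b < s → ({b, s} : Set ℤ) ∈ ρ₁ →
      0 < c → c < s → ({c, s} : Set ℤ) ∈ ρ₂ → b = c) : False := by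
  have hlegs : posRightLegs ρ₁ = posRightLegs ρ₂ := h₁.posRightLegs_eq.trans h₂.posRightLegs_eq.symm
  have ha₂ : a₂ ∉ posRightLegs ρ₁ := hlegs ▸ left_not_mem_posRightLegs h₂.isPartitionOn hr₂ ha₂r
  rcases h₁.block_of_pos ((h₂.isPartitionOn.1 _ hr₂).1 (Set.mem_insert a₂ _)) (ha₁.trans ha₁₂) with
    hsingle | ⟨x, y, hx, hxy, hxy₁, hx₂ | hy₂⟩
  · exact h₁.noCoveredSingleton ⟨a₁, r, a₂, ha₁₂, ha₂r, hr₁, hsingle⟩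
  · subst hx₂
    obtain ⟨c, hc, hcy, hcy₂⟩ := (mem_posRightLegs_iff h₂.sign).mp
      (hlegs ▸ (mem_posRightLegs_iff h₁.sign).mpr ⟨a₂, hx, hxy, hxy₁⟩)
    rcases lt_trichotomy y r with hyr | rfl | hry
    · obtain rfl := IH y hyr a₂ c hx hxy hxy₁ hc hcy hcy₂
      exact hyr.ne (h₂.isPartitionOn.pair_right_eq hcy₂ hr₂)
    · rw [Set.pair_comm] at hr₁ hxy₁
      exact ha₁₂.ne (h₁.isPartitionOn.pair_right_eq hr₁ hxy₁)
    · refine h₁.nonCrossing ⟨a₁, a₂, r, y, _, _, hr₁, hxy₁, fun h => ?_, ha₁₂, ha₂r, hry,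
        Set.mem_insert _ _, Set.mem_insert_of_mem _ rfl, Set.mem_insert _ _,
        Set.mem_insert_of_mem _ rfl⟩
      have : a₂ ∈ ({a₁, r} : Set ℤ) := h ▸ Set.mem_insert a₂ _
      rcases this with rfl | rfl <;> exact lt_irrefl _ ‹_›
  · subst hy₂
    exact ha₂ ((mem_posRightLegs_iff h₁.sign).mpr ⟨x, hx, hxy, hxy₁⟩)

theorem HatProps.partner_eq (h₁ : HatProps n π ρ₁) (h₂ : HatProps n π ρ₂) (r : ℤ) :
    ∀ a b, 0 < a → a < r → ({a, r} : Set ℤ) ∈ ρ₁ →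
      0 < b → b < r → ({b, r} : Set ℤ) ∈ ρ₂ → a = b := by
  induction r using Int.strongRec (m := 0) with
  | lt r hr => intro a _ ha har; omega
  | ge r _ ih =>
    intro a b ha har hr₁ hb hbr hr₂
    rcases lt_trichotomy a b with hab | rfl | hba
    · exact (h₁.not_lt_of_partners h₂ ha hr₁ hr₂ hab hbr fun s hs => ih s hs).elim
    · rfl
    · exact (h₂.not_lt_of_partners h₁ hb hr₂ hr₁ hba har fun s hs b c hb hbs hb₂ hc hcs hc₁ =>
        (ih s hs c b hc hcs hc₁ hb hbs hb₂).symm).elim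

theorem HatProps.pair_mem (h₁ : HatProps n π ρ₁) (h₂ : HatProps n π ρ₂) {a r : ℤ} (ha : 0 < a)
    (har : a < r) (hmem : ({a, r} : Set ℤ) ∈ ρ₁) : ({a, r} : Set ℤ) ∈ ρ₂ := by
  obtain ⟨c, hc, hcr, hcm⟩ := (mem_posRightLegs_iff h₂.sign).mp
    (h₂.posRightLegs_eq ▸ h₁.posRightLegs_eq ▸
      (mem_posRightLegs_iff h₁.sign).mpr ⟨a, ha, har, hmem⟩)
  rwa [h₁.partner_eq h₂ r a c ha har hmem hc hcr hcm]

theorem HatProps.singleton_mem (h₁ : HatProps n π ρ₁) (h₂ : HatProps n π ρ₂) {x : ℤ} (h0 : 0 < x)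
    (hmem : ({x} : Set ℤ) ∈ ρ₁) : ({x} : Set ℤ) ∈ ρ₂ := by
  rcases h₂.block_of_pos ((h₁.isPartitionOn.1 _ hmem).1 rfl) h0 with h | ⟨a, b, ha, hab, hm, hx⟩
  · exact h
  · have := h₁.isPartitionOn.eq_of_mem hmem (h₂.pair_mem h₁ ha hab hm) rfl hx
    have hb : b ∈ ({x} : Set ℤ) := this ▸ Set.mem_insert_of_mem a rfl
    have ha' : a ∈ ({x} : Set ℤ) := this ▸ Set.mem_insert a _
    exact absurd (ha'.trans hb.symm) hab.ne

theorem HatProps.subset (h₁ : HatProps n π ρ₁) (h₂ : HatProps n π ρ₂) : ρ₁ ⊆ ρ₂ := by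
  have hpos : ∀ B ∈ ρ₁, (∀ x ∈ B, 0 < x) → B ∈ ρ₂ := fun B hB hBpos => by
    obtain ⟨x, hx⟩ := (h₁.isPartitionOn.1 B hB).2
    rcases h₁.block_of_pos ((h₁.isPartitionOn.1 B hB).1 hx) (hBpos x hx) with
      h | ⟨a, b, ha, hab, hm, hxab⟩
    · rw [h₁.isPartitionOn.eq_of_mem hB h hx rfl]
      exact h₁.singleton_mem h₂ (hBpos x hx) h
    · rw [h₁.isPartitionOn.eq_of_mem hB hm hx hxab]
      exact h₁.pair_mem h₂ ha hab hm
  intro B hB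
  rcases h₁.sign B hB with h | h
  · exact hpos B hB h
  · rw [← negSet_negSet B]
    refine h₂.negSet_mem _ (hpos _ (h₁.negSet_mem B hB) fun x hx => ?_)
    linarith [h _ (mem_negSet.mp hx)]

end HatProps

theorem P12sym.hatProps_symmetrize_dyckBlocks {n : ℕ} {π : Set (Set ℤ)} (hπ : P12sym n π) :
    HatProps n π (symmetrize (dyckBlocks n (posRightLegs π))) := by
  have hpart : IsPartitionOn (Set.Icc 1 (n : ℤ)) (dyckBlocks n (posRightLegs π)) :=
    dyckBlocks_isPartitionOn fun r hr => (hπ.posRightLegs_bounds hr).2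
  have hpos : ∀ B ∈ dyckBlocks n (posRightLegs π), ∀ x ∈ B, 0 < x :=
    fun B hB x hx => ((hpart.1 B hB).1 hx).1
  have hpart' := symmetrize_isPartitionOn hpart
  have hsign := symmetrize_sign hpos
  have hsym : ∀ B ∈ symmetrize (dyckBlocks n (posRightLegs π)),
      negSet B ∈ symmetrize (dyckBlocks n (posRightLegs π)) := fun _ => negSet_mem_symmetrize
  have hlegs := (posRightLegs_symmetrize hpos).trans (posRightLegs_dyckBlocks fun r hr =>
    ⟨(hπ.posRightLegs_bounds hr).1, hπ.height_posRightLegs_nonneg (hπ.posRightLegs_bounds hr).1.le⟩)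
  refine ⟨hpart', symmetrize_pair_or_single dyckBlocks_pair_or_single,
    symmetrize_nonCrossing hpos dyckBlocks_nonCrossing, hsym, hsign, hlegs, ?_,
    symmetrize_noCoveredSingleton hpos dyckBlocks_noCoveredSingleton⟩
  rw [negLeftLegs_eq hsym fun B hB _ => negSet_ne_self (hpart'.1 B hB).2 (hsign B hB),
    negLeftLegs_eq hπ.2.2.1 hπ.2.2.2, hlegs]

/-- existence and uniqueness of π̂. -/
theorem hat_partition_exists_unique (n : ℕ) (π : Set (Set ℤ)) (hπ : P12sym n π) :
    ∃! ρ : Set (Set ℤ), HatProps n π ρ :=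
  have hhat := hπ.hatProps_symmetrize_dyckBlocks
  ⟨_, hhat, fun _ hρ => (hρ.subset hhat).antisymm (hhat.subset hρ)⟩

end TypeB
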